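/- Let 1 < p < 2 and let W₁, W₂ ∈ R^{d×d} with ‖W₁‖_{p,p} = ‖W₂‖_{p,p} = 1. Let ψ(W) = (1/p)‖W‖_{p,p}^p and D_ψ the associated Bregman divergence. Then D_ψ(W₁, W₂) ≥ ((p-1)²/p) ‖W₁ − W₂‖_{2,2}². -/

import Mathlib

/-!
Every entry of a matrix of unit `ℓ_{p,p}` norm lies in `[-1, 1]`, and `ψ` is the sum over entries
of `|w| ^ p / p`. On `[-M, M]` the derivative `sign w * |w| ^ (p - 1)` of this scalar function
grows at rate at least `(p - 1) * M ^ (p - 2)` (its second derivative is `(p - 1) * |w| ^ (p - 2)`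
and `p ≤ 2`), so `|w| ^ p / p` is `(p - 1) * M ^ (p - 2)`-strongly convex there. With `M = 1`,
summing the entrywise Bregman divergences gives `D_ψ(W₁, W₂) ≥ (p - 1) / 2 * ‖W₁ - W₂‖²`,
and `(p - 1) / 2 ≥ (p - 1) ^ 2 / p` because `p ≤ 2`.
-/

open Real Finset

/-- Entrywise `ℓ_{p,p}` norm of a `d × d` real matrix. -/
noncomputable def mpnorm {d : ℕ} (p : ℝ) (W : Fin d → Fin d → ℝ) : ℝ :=
  (∑ i, ∑ j, |W i j| ^ p) ^ (1 / p)

/-- Trace inner product `⟨A, B⟩ = trace(Aᵀ B) = ∑_{i,j} A_{ij} B_{ij}`. -/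
def mInner {d : ℕ} (A B : Fin d → Fin d → ℝ) : ℝ := ∑ i, ∑ j, A i j * B i j

/-- The potential `ψ(W) = (1/p) ‖W‖_{p,p}^p`. -/
noncomputable def psiP {d : ℕ} (p : ℝ) (W : Fin d → Fin d → ℝ) : ℝ :=
  (1 / p) * mpnorm p W ^ p

/-- The gradient of `ψ`, with entries `sign(V_{ij}) |V_{ij}|^{p-1}`. -/
noncomputable def gradPsi {d : ℕ} (p : ℝ) (V : Fin d → Fin d → ℝ) : Fin d → Fin d → ℝ :=
  fun i j => Real.sign (V i j) * |V i j| ^ (p - 1)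

/-- The Bregman divergence `D_ψ(W, V) = ψ(W) − ψ(V) − ⟨∇ψ(V), W − V⟩`. -/
noncomputable def DpsiP {d : ℕ} (p : ℝ) (W V : Fin d → Fin d → ℝ) : ℝ :=
  psiP p W - psiP p V - mInner (gradPsi p V) (W - V)

theorem ConvexOn.add_mul_sub_le_of_hasDerivAt {S : Set ℝ} {f : ℝ → ℝ} {f' x y : ℝ}
    (hf : ConvexOn ℝ S f) (hx : x ∈ S) (hy : y ∈ S) (hf' : HasDerivAt f f' y) :
    f y + f' * (x - y) ≤ f x := by
  rcases lt_trichotomy x y with hxy | rfl | hyx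
  · have h := hf.slope_le_of_hasDerivAt hx hy hxy hf'
    rw [slope_def_field, div_le_iff₀ (sub_pos.2 hxy)] at h
    linarith
  · simp
  · have h := hf.le_slope_of_hasDerivAt hy hx hyx hf'
    rw [slope_def_field, le_div_iff₀ (sub_pos.2 hyx)] at h
    linarith

section AbsRpow

variable {p M : ℝ}

theorem hasDerivAt_abs_rpow_div (hp : 1 < p) (x : ℝ) :
    HasDerivAt (fun w => |w| ^ p / p) (sign x * |x| ^ (p - 1)) x := by
  refine ((hasDerivAt_abs_rpow x hp).div_const p).congr_deriv ?_
  rcases eq_or_ne x 0 with rfl | hx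
  · simp [sign_zero]
  have hsign : x = sign x * |x| := by
    rcases hx.lt_or_gt with h | h
    · rw [sign_of_neg h, abs_of_neg h]; ring
    · rw [sign_of_pos h, abs_of_pos h]; ring
  rw [show p - 1 = p - 2 + 1 by ring, rpow_add_one (abs_ne_zero.2 hx)]
  calc p * |x| ^ (p - 2) * x / p = |x| ^ (p - 2) * (sign x * |x|) := by
        rw [← hsign]; field_simp
    _ = sign x * (|x| ^ (p - 2) * |x|) := by ring

theorem sign_mul_abs_rpow_of_nonneg {q w : ℝ} (hq : q ≠ 0) (hw : 0 ≤ w) :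
    sign w * |w| ^ q = w ^ q := by
  rcases hw.eq_or_lt with rfl | hw
  · simp [zero_rpow hq]
  · rw [sign_of_pos hw, abs_of_pos hw, one_mul]

/-- Tangent line of the concave function `w ↦ w ^ (p - 1)` at `v`, and `v ^ (p - 2) ≥ M ^ (p - 2)`. -/
theorem mul_sub_le_rpow_sub_rpow (hp1 : 1 < p) (hp2 : p ≤ 2) {u v : ℝ} (hu : 0 ≤ u)
    (huv : u ≤ v) (hvM : v ≤ M) :
    (p - 1) * M ^ (p - 2) * (v - u) ≤ v ^ (p - 1) - u ^ (p - 1) := by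
  rcases huv.eq_or_lt with rfl | huv
  · simp
  have hv : 0 < v := hu.trans_lt huv
  have hderiv : HasDerivAt (fun w => w ^ (p - 1)) ((p - 1) * v ^ (p - 2)) v := by
    rw [show p - 2 = p - 1 - 1 by ring]
    exact hasDerivAt_rpow_const (Or.inl hv.ne')
  have hslope := (concaveOn_rpow (by linarith) (by linarith)).le_slope_of_hasDerivAt
    (Set.mem_Ici.2 hu) (Set.mem_Ici.2 hv.le) huv hderiv
  rw [slope_def_field, le_div_iff₀ (sub_pos.2 huv)] at hslope
  have hMv : M ^ (p - 2) ≤ v ^ (p - 2) := rpow_le_rpow_of_nonpos hv hvM (by linarith)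
  calc (p - 1) * M ^ (p - 2) * (v - u) ≤ (p - 1) * v ^ (p - 2) * (v - u) := by
        gcongr
    _ ≤ _ := hslope

theorem monotoneOn_sign_mul_abs_rpow_sub (hp1 : 1 < p) (hp2 : p ≤ 2) :
    MonotoneOn (fun w => sign w * |w| ^ (p - 1) - (p - 1) * M ^ (p - 2) * w)
      (Set.Icc (-M) M) := by
  have hq : p - 1 ≠ 0 := by linarith
  have hodd : ∀ w, sign w * |w| ^ (p - 1) = -(sign (-w) * |-w| ^ (p - 1)) := fun w => by
    rw [sign_neg, abs_neg]; ring
  intro u ⟨hMu, _⟩ v ⟨_, hvM⟩ huv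
  dsimp only
  rcases le_total 0 u with hu | hu
  · rw [sign_mul_abs_rpow_of_nonneg hq hu, sign_mul_abs_rpow_of_nonneg hq (hu.trans huv)]
    linarith [mul_sub_le_rpow_sub_rpow hp1 hp2 hu huv hvM]
  rcases le_total v 0 with hv | hv
  · rw [hodd u, hodd v, sign_mul_abs_rpow_of_nonneg hq (neg_nonneg.2 hu),
      sign_mul_abs_rpow_of_nonneg hq (neg_nonneg.2 hv)]
    linarith [mul_sub_le_rpow_sub_rpow hp1 hp2 (neg_nonneg.2 hv) (neg_le_neg huv) (neg_le.1 hMu)]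
  · rw [hodd u, sign_mul_abs_rpow_of_nonneg hq (neg_nonneg.2 hu),
      sign_mul_abs_rpow_of_nonneg hq hv]
    have hv' := mul_sub_le_rpow_sub_rpow hp1 hp2 le_rfl hv hvM
    have hu' := mul_sub_le_rpow_sub_rpow hp1 hp2 le_rfl (neg_nonneg.2 hu) (neg_le.1 hMu)
    rw [zero_rpow hq] at hv' hu'
    linarith

theorem abs_rpow_bregman_lower_bound (hp1 : 1 < p) (hp2 : p ≤ 2) {x y : ℝ}
    (hx : |x| ≤ M) (hy : |y| ≤ M) :
    (p - 1) * M ^ (p - 2) / 2 * (x - y) ^ 2 ≤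
      |x| ^ p / p - |y| ^ p / p - sign y * |y| ^ (p - 1) * (x - y) := by
  set c := (p - 1) * M ^ (p - 2)
  have hderiv : ∀ w, HasDerivAt (fun w => |w| ^ p / p - c / 2 * w ^ 2)
      (sign w * |w| ^ (p - 1) - c * w) w := fun w =>
    ((hasDerivAt_abs_rpow_div hp1 w).sub ((hasDerivAt_pow 2 w).const_mul (c / 2))).congr_deriv
      (by ring)
  have hconvex : ConvexOn ℝ (Set.Icc (-M) M) (fun w => |w| ^ p / p - c / 2 * w ^ 2) := by
    refine MonotoneOn.convexOn_of_deriv (convex_Icc _ _)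
      (fun w _ => (hderiv w).continuousAt.continuousWithinAt)
      (fun w _ => (hderiv w).differentiableAt.differentiableWithinAt) ?_
    rw [funext fun w => (hderiv w).deriv, interior_Icc]
    exact (monotoneOn_sign_mul_abs_rpow_sub hp1 hp2).mono Set.Ioo_subset_Icc_self
  have h := hconvex.add_mul_sub_le_of_hasDerivAt (abs_le.1 hx) (abs_le.1 hy) (hderiv y)
  linear_combination h

end AbsRpow

section Matrix

variable {d : ℕ} {p : ℝ}

theorem mpnorm_rpow (hp : p ≠ 0) (W : Fin d → Fin d → ℝ) :
    mpnorm p W ^ p = ∑ i, ∑ j, |W i j| ^ p := by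
  rw [mpnorm, one_div, rpow_inv_rpow (by positivity) hp]

theorem abs_le_mpnorm (hp : 0 < p) (W : Fin d → Fin d → ℝ) (i j : Fin d) :
    |W i j| ≤ mpnorm p W := by
  have hentry : |W i j| ^ p ≤ ∑ i, ∑ j, |W i j| ^ p :=
    calc |W i j| ^ p ≤ ∑ j, |W i j| ^ p :=
          single_le_sum (f := fun j => |W i j| ^ p) (fun j _ => by positivity) (mem_univ j)
      _ ≤ ∑ i, ∑ j, |W i j| ^ p :=
          single_le_sum (f := fun i => ∑ j, |W i j| ^ p) (fun i _ => by positivity) (mem_univ i)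
  calc |W i j| = (|W i j| ^ p) ^ (1 / p) := by rw [one_div, rpow_rpow_inv (abs_nonneg _) hp.ne']
    _ ≤ mpnorm p W := by rw [mpnorm]; gcongr

theorem DpsiP_eq_sum (hp : p ≠ 0) (W V : Fin d → Fin d → ℝ) :
    DpsiP p W V = ∑ i, ∑ j,
      (|W i j| ^ p / p - |V i j| ^ p / p - sign (V i j) * |V i j| ^ (p - 1) * (W i j - V i j)) := by
  simp only [DpsiP, psiP, mInner, gradPsi, mpnorm_rpow hp, sum_sub_distrib, mul_sum, Pi.sub_apply]
  simp only [div_eq_inv_mul, mul_one]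

theorem DpsiP_lower_bound (hp1 : 1 < p) (hp2 : p ≤ 2) {M : ℝ} {W V : Fin d → Fin d → ℝ}
    (hW : ∀ i j, |W i j| ≤ M) (hV : ∀ i j, |V i j| ≤ M) :
    (p - 1) * M ^ (p - 2) / 2 * ∑ i, ∑ j, (W i j - V i j) ^ 2 ≤ DpsiP p W V := by
  rw [DpsiP_eq_sum (by linarith), mul_sum]
  refine sum_le_sum fun i _ => ?_
  rw [mul_sum]
  exact sum_le_sum fun j _ => abs_rpow_bregman_lower_bound hp1 hp2 (hW i j) (hV i j)

end Matrix

/-- For `1 < p < 2` and unit `ℓ_{p,p}`-norm matrices, the Bregman divergence of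
`ψ = (1/p)‖·‖_{p,p}^p` is at least `((p-1)²/p) ‖W₁ − W₂‖_{2,2}²` (Frobenius norm squared). -/
theorem bregman_lower_bound_lt_two {d : ℕ} (p : ℝ) (hp1 : 1 < p) (hp2 : p < 2)
    (W₁ W₂ : Fin d → Fin d → ℝ) (h1 : mpnorm p W₁ = 1) (h2 : mpnorm p W₂ = 1) :
    ((p - 1) ^ 2 / p) * (∑ i, ∑ j, (W₁ i j - W₂ i j) ^ 2) ≤ DpsiP p W₁ W₂ := by
  have hp0 : 0 < p := by linarith
  have hbound := DpsiP_lower_bound (M := 1) hp1 hp2.le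
    (fun i j => h1 ▸ abs_le_mpnorm hp0 W₁ i j) (fun i j => h2 ▸ abs_le_mpnorm hp0 W₂ i j)
  rw [one_rpow, mul_one] at hbound
  have hcoef : (p - 1) ^ 2 / p ≤ (p - 1) / 2 := by
    rw [div_le_div_iff₀ hp0 two_pos]
    nlinarith
  exact (mul_le_mul_of_nonneg_right hcoef (by positivity)).trans hbound
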